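/- The pair (a⁻, a⁺) acts irreducibly on C(ℤ_p, ℚ_p): every closed ℚ_p-linear subspace W of C(ℤ_p, ℚ_p) that is invariant under both a⁺ and a⁻ is either the zero subspace or all of C(ℤ_p, ℚ_p). -/

import Mathlib

/-- The raising operator `a⁺`: `(a⁺ f)(x) = x · f(x - 1)`. -/
noncomputable def aPlus (p : ℕ) [Fact p.Prime] (f : ℤ_[p] → ℚ_[p]) (x : ℤ_[p]) : ℚ_[p] :=
  (x : ℚ_[p]) * f (x - 1)

/-- The lowering operator `a⁻`: `(a⁻ f)(x) = f(x + 1) - f(x)`. -/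
noncomputable def aMinus (p : ℕ) [Fact p.Prime] (f : ℤ_[p] → ℚ_[p]) (x : ℤ_[p]) : ℚ_[p] :=
  f (x + 1) - f x

/-!
Mahler's theorem identifies `C(ℤ_[p], ℚ_[p])` isometrically with `c₀(ℕ, ℚ_[p])` through the
coefficients `cₙ = Δⁿ f (0)`. In these coordinates `a⁻` is the left shift and `a⁺` sends `(cₙ)` to
`(0, c₀, 2 c₁, 3 c₂, …)`, so `(a⁺)ᵏ (a⁻)ᵏ` is diagonal with eigenvalues `n (n - 1) ⋯ (n - k + 1)`.
Hence `∑_{k ≤ M} (-1)ᵏ / k! (a⁺)ᵏ (a⁻)ᵏ` multiplies `cₙ` by the integer `∑_{k ≤ M} (-1)ᵏ (n choose k)`,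
which is `1` at `n = 0` and vanishes for `1 ≤ n ≤ M`; applied to `g` it therefore converges to the
constant `g 0`. A nonzero closed invariant subspace contains, after applying a power of `a⁻`, some
`g` with `g 0 ≠ 0`, hence the constant `1`, and then `(a⁺)ⁿ 1 = n! (x choose n)` puts every
Mahler basis function into it.
-/

open scoped fwdDiff Nat
open Finset Filter Topology Function

instance PadicInt.instIsBoundedSMulPadic {p : ℕ} [Fact p.Prime] : IsBoundedSMul ℤ_[p] ℚ_[p] :=
  IsBoundedSMul.of_norm_smul_le fun r x => by
    rw [Algebra.smul_def, norm_mul]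
    rfl

theorem fwdDiff_iter_sub {M G : Type*} [AddCommMonoid M] [AddCommGroup G] (h : M) (f g : M → G)
    (n : ℕ) : Δ_[h] ^[n] (f - g) = Δ_[h] ^[n] f - Δ_[h] ^[n] g := by
  simpa only [fwdDiff_aux.coe_fwdDiffₗ_pow] using map_sub (fwdDiff_aux.fwdDiffₗ M G h ^ n) f g

theorem fwdDiff_iter_succ_const {M G : Type*} [AddCommMonoid M] [AddCommGroup G] (h : M) (c : G)
    (n : ℕ) : Δ_[h] ^[n + 1] (Function.const M c) = 0 := by
  rw [iterate_succ_apply]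
  exact (congrArg _ (fwdDiff_const h c)).trans (iterate_fixed (fwdDiff_const h 0) n)

section Mahler

variable {p : ℕ} [Fact p.Prime] {E : Type*} [NormedAddCommGroup E] [Module ℤ_[p] E]
  [IsBoundedSMul ℤ_[p] E] [IsUltrametricDist E] [CompleteSpace E]

theorem PadicInt.norm_le_of_forall_norm_fwdDiff_iter_le (f : C(ℤ_[p], E)) {ε : ℝ} (hε : 0 ≤ ε)
    (h : ∀ n, ‖Δ_[1] ^[n] f 0‖ ≤ ε) : ‖f‖ ≤ ε := by
  rw [← (mahlerEquiv E).norm_map f, ← ZeroAtInftyContinuousMap.norm_toBCF_eq_norm]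
  exact (BoundedContinuousFunction.norm_le hε).mpr h

theorem PadicInt.exists_fwdDiff_iter_apply_zero_ne_zero {f : C(ℤ_[p], E)} (hf : f ≠ 0) :
    ∃ n, Δ_[1] ^[n] f 0 ≠ 0 := by
  by_contra! h
  exact hf <| (mahlerEquiv E).map_eq_zero_iff.mp <| ZeroAtInftyContinuousMap.ext h

end Mahler

section VacuumApprox

variable (K : Type*) {E : Type*} [Field K] [AddCommGroup E] [Module K E]

/-- The degree-`M` truncation of the normally ordered exponential `:exp(-A B):`; for the
canonical pair `(a⁺, a⁻)` this is the projection onto the vacuum, the constant functions. -/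
noncomputable def vacuumApprox (A B : E → E) (M : ℕ) (u : E) : E :=
  ∑ k ∈ range (M + 1), ((-1) ^ k / k ! : K) • A^[k] (B^[k] u)

variable {K}

theorem Submodule.vacuumApprox_mem {W : Submodule K E} {A B : E → E} (hA : Set.MapsTo A W W)
    (hB : Set.MapsTo B W W) (M : ℕ) {u : E} (hu : u ∈ W) : vacuumApprox K A B M u ∈ W :=
  W.sum_mem fun k _ => W.smul_mem _ (hA.iterate k (hB.iterate k hu))

end VacuumApprox

variable {p : ℕ} [Fact p.Prime]

theorem aMinus_eq_fwdDiff : aMinus p = Δ_[1] := rfl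

theorem aPlus_apply_zero (u : ℤ_[p] → ℚ_[p]) : aPlus p u 0 = 0 := by
  simp [aPlus]

-- The canonical commutation relation `[a⁻, a⁺] = 1`.
theorem fwdDiff_aPlus (u : ℤ_[p] → ℚ_[p]) : Δ_[1] (aPlus p u) = aPlus p (Δ_[1] u) + u := by
  funext x
  simp only [fwdDiff, aPlus, Pi.add_apply, add_sub_cancel_right, sub_add_cancel]
  push_cast
  ring

theorem fwdDiff_iter_succ_aPlus (u : ℤ_[p] → ℚ_[p]) (n : ℕ) :
    Δ_[1] ^[n + 1] (aPlus p u) = aPlus p (Δ_[1] ^[n + 1] u) + (n + 1 : ℚ_[p]) • Δ_[1] ^[n] u := by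
  induction n with
  | zero => simpa using fwdDiff_aPlus u
  | succ n ih =>
    rw [iterate_succ_apply', ih, fwdDiff_add, fwdDiff_const_smul, fwdDiff_aPlus,
      ← iterate_succ_apply' (Δ_[1]) (n + 1), ← iterate_succ_apply' (Δ_[1]) n]
    push_cast
    module

theorem fwdDiff_iter_aPlus_apply_zero (u : ℤ_[p] → ℚ_[p]) (n : ℕ) :
    Δ_[1] ^[n] (aPlus p u) 0 = n * Δ_[1] ^[n - 1] u 0 := by
  cases n with
  | zero => simp [aPlus_apply_zero]
  | succ n => simp [fwdDiff_iter_succ_aPlus, aPlus_apply_zero]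

theorem fwdDiff_iter_aPlus_iter_apply_zero (u : ℤ_[p] → ℚ_[p]) (n k : ℕ) :
    Δ_[1] ^[n] ((aPlus p)^[k] u) 0 = n.descFactorial k * Δ_[1] ^[n - k] u 0 := by
  induction k generalizing u with
  | zero => simp
  | succ k ih =>
    rw [iterate_succ_apply, ih, fwdDiff_iter_aPlus_apply_zero, Nat.descFactorial_succ,
      Nat.sub_sub, Nat.cast_mul]
    ring

theorem fwdDiff_iter_aPlus_iter_aMinus_iter_apply_zero (u : ℤ_[p] → ℚ_[p]) (n k : ℕ) :
    Δ_[1] ^[n] ((aPlus p)^[k] ((aMinus p)^[k] u)) 0 = n.descFactorial k * Δ_[1] ^[n] u 0 := by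
  rw [fwdDiff_iter_aPlus_iter_apply_zero, aMinus_eq_fwdDiff, ← iterate_add_apply]
  rcases le_or_gt k n with h | h
  · rw [Nat.sub_add_cancel h]
  · simp [Nat.descFactorial_eq_zero_iff_lt.mpr h]

theorem fwdDiff_iter_vacuumApprox_apply_zero (u : ℤ_[p] → ℚ_[p]) (M n : ℕ) :
    Δ_[1] ^[n] (vacuumApprox ℚ_[p] (aPlus p) (aMinus p) M u) 0 =
      (∑ k ∈ range (M + 1), (-1) ^ k * n.choose k : ℤ) * Δ_[1] ^[n] u 0 := by
  simp only [vacuumApprox, fwdDiff_iter_finsetSum, fwdDiff_iter_const_smul, Finset.sum_apply,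
    Pi.smul_apply, smul_eq_mul, fwdDiff_iter_aPlus_iter_aMinus_iter_apply_zero,
    Nat.descFactorial_eq_factorial_mul_choose]
  push_cast
  rw [sum_mul]
  refine sum_congr rfl fun k _ => ?_
  have : (k ! : ℚ_[p]) ≠ 0 := Nat.cast_ne_zero.mpr k.factorial_ne_zero
  field_simp

section ContinuousMaps

variable {A B : C(ℤ_[p], ℚ_[p]) → C(ℤ_[p], ℚ_[p])}
  (hA : Semiconj (⇑) A (aPlus p)) (hB : Semiconj (⇑) B (aMinus p))
include hA hB

theorem coe_vacuumApprox (M : ℕ) (g : C(ℤ_[p], ℚ_[p])) :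
    ⇑(vacuumApprox ℚ_[p] A B M g) = vacuumApprox ℚ_[p] (aPlus p) (aMinus p) M g := by
  simp only [vacuumApprox, ContinuousMap.coe_sum, ContinuousMap.coe_smul,
    (hA.iterate_right _).eq, (hB.iterate_right _).eq]

theorem norm_vacuumApprox_sub_const_le (g : C(ℤ_[p], ℚ_[p])) (M : ℕ) {ε : ℝ} (hε : 0 ≤ ε)
    (hg : ∀ n > M, ‖Δ_[1] ^[n] g 0‖ ≤ ε) :
    ‖vacuumApprox ℚ_[p] A B M g - ContinuousMap.const _ (g 0)‖ ≤ ε := by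
  refine PadicInt.norm_le_of_forall_norm_fwdDiff_iter_le _ hε fun n => ?_
  rw [ContinuousMap.coe_sub, fwdDiff_iter_sub, Pi.sub_apply, coe_vacuumApprox hA hB,
    fwdDiff_iter_vacuumApprox_apply_zero, ContinuousMap.coe_const]
  cases n with
  | zero => simp [sum_range_succ', hε]
  | succ n =>
    rw [fwdDiff_iter_succ_const, Int.alternating_sum_range_choose_eq_choose]
    rcases lt_or_ge n M with h | h
    · simp [Nat.choose_eq_zero_of_lt h, hε]
    · calc _ = ‖(((-1) ^ M * n.choose M : ℤ) : ℚ_[p])‖ * ‖Δ_[1] ^[n + 1] g 0‖ := by simp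
        _ ≤ 1 * ε := by gcongr; exacts [Padic.norm_int_le_one _, hg _ (by omega)]
        _ = ε := one_mul ε

theorem tendsto_vacuumApprox (g : C(ℤ_[p], ℚ_[p])) :
    Tendsto (fun M => vacuumApprox ℚ_[p] A B M g) atTop (𝓝 (.const _ (g 0))) := by
  rw [tendsto_iff_norm_sub_tendsto_zero, NormedAddGroup.tendsto_nhds_zero]
  intro ε hε
  obtain ⟨N, hN⟩ := eventually_atTop.mp <|
    NormedAddGroup.tendsto_nhds_zero.mp (PadicInt.fwdDiff_tendsto_zero g) (ε / 2) (by positivity)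
  refine eventually_atTop.mpr ⟨N, fun M hM => ?_⟩
  rw [norm_norm]
  refine (norm_vacuumApprox_sub_const_le hA hB g M (by positivity) fun n hn => ?_).trans_lt
    (half_lt_self hε)
  exact (hN n (by omega)).le

end ContinuousMaps

theorem aPlus_iter_one (n : ℕ) :
    (aPlus p)^[n] 1 = fun x => (((descPochhammer ℤ n).smeval x : ℤ_[p]) : ℚ_[p]) := by
  induction n with
  | zero => funext x; simp
  | succ n ih =>
    funext x
    rw [iterate_succ_apply', ih, aPlus, descPochhammer_succ_left, Polynomial.smeval_mul,
      Polynomial.smeval_comp, Polynomial.smeval_X, Polynomial.smeval_sub, Polynomial.smeval_X,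
      Polynomial.smeval_one]
    simp

theorem mahlerTerm_eq_smul_aPlus_iter_one (a : ℚ_[p]) (n : ℕ) :
    ⇑(PadicInt.mahlerTerm a n : C(ℤ_[p], ℚ_[p])) = (a / n !) • (aPlus p)^[n] 1 := by
  have : (n ! : ℚ_[p]) ≠ 0 := Nat.cast_ne_zero.mpr n.factorial_ne_zero
  funext x
  rw [aPlus_iter_one, Pi.smul_apply, Ring.descPochhammer_eq_factorial_smul_choose,
    PadicInt.mahlerTerm_apply, mahler_apply]
  simp only [Algebra.smul_def, PadicInt.algebraMap_apply, Algebra.algebraMap_self,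
    RingHom.id_apply, eq_natCast, PadicInt.coe_mul, PadicInt.coe_natCast]
  field_simp

theorem Submodule.eq_top_of_one_mem {A : C(ℤ_[p], ℚ_[p]) → C(ℤ_[p], ℚ_[p])}
    (hA : Semiconj (⇑) A (aPlus p)) {W : Submodule ℚ_[p] C(ℤ_[p], ℚ_[p])}
    (hW : IsClosed (W : Set C(ℤ_[p], ℚ_[p]))) (hWA : Set.MapsTo A W W) (h1 : 1 ∈ W) : W = ⊤ := by
  have hterm (a : ℚ_[p]) (n : ℕ) : PadicInt.mahlerTerm a n ∈ W := by
    have : PadicInt.mahlerTerm a n = (a / n !) • A^[n] 1 := DFunLike.coe_injective <| by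
      rw [mahlerTerm_eq_smul_aPlus_iter_one, ContinuousMap.coe_smul, (hA.iterate_right n).eq,
        ContinuousMap.coe_one]
    rw [this]
    exact W.smul_mem _ (hWA.iterate n h1)
  rw [eq_top_iff']
  exact fun g => hW.mem_of_tendsto (PadicInt.hasSum_mahler g)
    (Eventually.of_forall fun s => W.sum_mem fun n _ => hterm _ n)

/-- The pair `(a⁻, a⁺)` acts irreducibly on `C(ℤ_[p], ℚ_[p])`: every closed
`ℚ_[p]`-linear subspace invariant under both `a⁺` and `a⁻` is `⊥` or `⊤`. -/
theorem ccr_irreducible (p : ℕ) [Fact p.Prime]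
    (Aplus Aminus : C(ℤ_[p], ℚ_[p]) →L[ℚ_[p]] C(ℤ_[p], ℚ_[p]))
    (hAp : ∀ (f : C(ℤ_[p], ℚ_[p])) (x : ℤ_[p]), Aplus f x = aPlus p (⇑f) x)
    (hAm : ∀ (f : C(ℤ_[p], ℚ_[p])) (x : ℤ_[p]), Aminus f x = aMinus p (⇑f) x)
    (W : Submodule ℚ_[p] C(ℤ_[p], ℚ_[p])) (hW : IsClosed (W : Set C(ℤ_[p], ℚ_[p])))
    (hWp : ∀ f ∈ W, Aplus f ∈ W) (hWm : ∀ f ∈ W, Aminus f ∈ W) :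
    W = ⊥ ∨ W = ⊤ := by
  refine or_iff_not_imp_left.mpr fun hbot => ?_
  have hA : Semiconj (⇑) Aplus (aPlus p) := fun f => funext (hAp f)
  have hB : Semiconj (⇑) Aminus (aMinus p) := fun f => funext (hAm f)
  obtain ⟨f, hfW, hf⟩ := W.ne_bot_iff.mp hbot
  obtain ⟨n, hn⟩ := PadicInt.exists_fwdDiff_iter_apply_zero_ne_zero hf
  set g := Aminus^[n] f
  have hgW : g ∈ W := Set.MapsTo.iterate hWm n hfW
  have hg0 : g 0 ≠ 0 := by rwa [congrFun ((hB.iterate_right n).eq f) 0]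
  have hconst : ContinuousMap.const ℤ_[p] (g 0) ∈ W :=
    hW.mem_of_tendsto (tendsto_vacuumApprox hA hB g)
      (Eventually.of_forall fun M => W.vacuumApprox_mem hWp hWm M hgW)
  have h1 : (g 0)⁻¹ • ContinuousMap.const ℤ_[p] (g 0) = 1 := by ext; simp [hg0]
  exact W.eq_top_of_one_mem hA hW hWp (h1 ▸ W.smul_mem _ hconst)
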